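/- arXiv:1609.05984 — 2 statements merged into one kernel-verified Lean document; each statement's English description precedes it below -/
import Mathlib

section
/- Let G = (L, R, E) be a bipartite multigraph with each left vertex of degree exactly D, and suppose G is an (|B|, ε)-extractor on B ⊆ L in the sense that for every A ⊆ R, | |E(B,A)|/(|B|·D) − |A|/|R| | ≤ ε. Let A be the set of (1/ε)-heavy right vertices (those with more than (1/ε)·|B|·D/|R| edges from B). Call x ∈ B δ-bad if at least δ·D of the edges leaving x land in A. Then the number of δ-bad vertices of B is at most (2ε/δ)·|B|. In particular, if ε = δ², at most 2δ·|B| vertices of B are δ-bad. -/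
/-!
Let `A` be the heavy set and `e = |E(B,A)| / (|B| D)`. Every vertex of `A` receives more than
`|B| D / (ε |R|)` edges from `B`, so `|A| / |R| ≤ ε e`; the extractor property then gives
`e ≤ |A| / |R| + ε ≤ ε e + ε ≤ 2ε`. Each δ-bad vertex sends at least `δ D` of these edges into
`A`, so by counting there are at most `2ε |B| / δ` of them.
-/

open Finset

namespace BipartiteExtractor

variable {L R : Type*} [DecidableEq R] {D : ℕ} (N : L → Fin D → R) (B : Finset L)

/-- `E(B, A)`: the edge `(x, i)` joins `x` to its `i`-th neighbour `N x i`. -/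
def edgesInto (A : Finset R) : Finset (L × Fin D) :=
  (B ×ˢ univ).filter fun p => N p.1 p.2 ∈ A

def degreeFrom (z : R) : ℕ :=
  #((B ×ˢ univ).filter fun p => N p.1 p.2 = z)

variable {N B}

lemma card_edgesInto_le (A : Finset R) : #(edgesInto N B A) ≤ #B * D := by
  simpa [edgesInto] using card_filter_le (B ×ˢ (univ : Finset (Fin D))) _

lemma card_edgesInto_eq_sum_degreeFrom (A : Finset R) :
    #(edgesInto N B A) = ∑ z ∈ A, degreeFrom N B z := by
  unfold edgesInto degreeFrom
  refine (card_eq_sum_card_fiberwise fun p hp => (mem_filter.1 hp).2).trans <|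
    sum_congr rfl fun z hz => ?_
  rw [filter_filter]
  exact congrArg card <| filter_congr fun p _ => ⟨And.right, fun h => ⟨h ▸ hz, h⟩⟩

lemma sum_card_le_card_edgesInto {S : Finset L} (hS : S ⊆ B) (A : Finset R) :
    ∑ x ∈ S, #{i | N x i ∈ A} ≤ #(edgesInto N B A) := by
  calc ∑ x ∈ S, #{i | N x i ∈ A}
      = #((S ×ˢ univ).filter fun p => N p.1 p.2 ∈ A) := by
        simp only [card_filter, sum_product]
    _ ≤ #(edgesInto N B A) :=
        card_le_card <| filter_subset_filter _ <| product_subset_product_left hS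

lemma card_filter_mul_le_card_edgesInto (A : Finset R) (t : ℚ) :
    (#(B.filter fun x => t ≤ #{i | N x i ∈ A}) : ℚ) * t ≤ #(edgesInto N B A) := by
  calc (#(B.filter fun x => t ≤ #{i | N x i ∈ A}) : ℚ) * t
      ≤ ∑ x ∈ B.filter (fun x => t ≤ #{i | N x i ∈ A}), (#{i | N x i ∈ A} : ℚ) := by
        rw [← nsmul_eq_mul]
        exact card_nsmul_le_sum _ _ _ fun x hx => (mem_filter.1 hx).2
    _ ≤ #(edgesInto N B A) := by
        exact_mod_cast sum_card_le_card_edgesInto (filter_subset _ B) A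

variable [Fintype R]

lemma card_div_le_of_le_degreeFrom {A : Finset R} {ε : ℚ} (hε : 0 < ε)
    (hB : (0 : ℚ) < #B * D) (hR : (0 : ℚ) < Fintype.card R)
    (hA : ∀ z ∈ A, 1 / ε * #B * D / Fintype.card R ≤ degreeFrom N B z) :
    (#A : ℚ) / Fintype.card R ≤ ε * (#(edgesInto N B A) / (#B * D)) := by
  have hsum : (#A : ℚ) * (1 / ε * #B * D / Fintype.card R) ≤ #(edgesInto N B A) := by
    rw [← nsmul_eq_mul, card_edgesInto_eq_sum_degreeFrom, Nat.cast_sum]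
    exact card_nsmul_le_sum _ _ _ hA
  rw [mul_div_assoc', le_div_iff₀ hB]
  calc (#A : ℚ) / Fintype.card R * (#B * D)
      = ε * ((#A : ℚ) * (1 / ε * #B * D / Fintype.card R)) := by
        field_simp
    _ ≤ ε * #(edgesInto N B A) := by gcongr

lemma card_edgesInto_le_of_le_degreeFrom {A : Finset R} {ε : ℚ} (hε : 0 < ε)
    (hext : |(#(edgesInto N B A) : ℚ) / (#B * D) - #A / Fintype.card R| ≤ ε)
    (hA : ∀ z ∈ A, 1 / ε * #B * D / Fintype.card R ≤ degreeFrom N B z) :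
    (#(edgesInto N B A) : ℚ) ≤ 2 * ε * (#B * D) := by
  obtain ⟨⟨x, i⟩, hp⟩ | hempty := (edgesInto N B A).eq_empty_or_nonempty.symm
  · have hx : x ∈ B := (mem_product.1 (mem_filter.1 hp).1).1
    have hB : (0 : ℚ) < #B * D := by
      have : 0 < D := i.pos
      have : 0 < #B := card_pos.2 ⟨x, hx⟩
      positivity
    have hR : (0 : ℚ) < Fintype.card R := by
      have : Nonempty R := ⟨N x i⟩
      exact_mod_cast Fintype.card_pos
    have hshare : (#(edgesInto N B A) : ℚ) / (#B * D) ≤ 1 := by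
      rw [div_le_one hB]; exact_mod_cast card_edgesInto_le (N := N) (B := B) A
    have hA' := card_div_le_of_le_degreeFrom hε hB hR hA
    have hratio : (#(edgesInto N B A) : ℚ) / (#B * D) ≤ 2 * ε := by
      nlinarith [(abs_le.1 hext).2]
    exact (div_le_iff₀ hB).1 hratio
  · rw [hempty, card_empty, Nat.cast_zero]
    positivity

end BipartiteExtractor

open BipartiteExtractor in
theorem stmt_1_general {L R : Type*} [Fintype R] [DecidableEq R]
    (D : ℕ) (hD : 1 ≤ D) (N : L → Fin D → R)
    (B : Finset L)
    (δ ε : ℚ) (hδ : 0 < δ) (hε : 0 < ε)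
    (hext : ∀ A : Finset R,
      |(((B ×ˢ (Finset.univ : Finset (Fin D))).filter (fun p => N p.1 p.2 ∈ A)).card : ℚ)
          / (B.card * D)
        - (A.card : ℚ) / Fintype.card R| ≤ ε) :
    let heavy : Finset R := Finset.univ.filter (fun z =>
      (1 / ε) * B.card * D / Fintype.card R <
        (((B ×ˢ (Finset.univ : Finset (Fin D))).filter (fun p => N p.1 p.2 = z)).card : ℚ))
    ((B.filter (fun x => δ * D ≤
        (((Finset.univ : Finset (Fin D)).filter (fun i => N x i ∈ heavy)).card : ℚ))).card : ℚ)
      ≤ (2 * ε / δ) * B.card ∧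
    (ε = δ ^ 2 →
      ((B.filter (fun x => δ * D ≤
          (((Finset.univ : Finset (Fin D)).filter (fun i => N x i ∈ heavy)).card : ℚ))).card : ℚ)
        ≤ 2 * δ * B.card) := by
  intro heavy
  have hDpos : (0 : ℚ) < D := by exact_mod_cast hD
  have hheavy : (#(edgesInto N B heavy) : ℚ) ≤ 2 * ε * (#B * D) :=
    card_edgesInto_le_of_le_degreeFrom hε (hext heavy) fun z hz => (mem_filter.1 hz).2.le
  have hbad := card_filter_mul_le_card_edgesInto (N := N) (B := B) heavy (δ * D)
  have hbound : (#(B.filter fun x => δ * D ≤ #{i | N x i ∈ heavy}) : ℚ)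
      ≤ 2 * ε / δ * #B := by
    rw [div_mul_eq_mul_div, le_div_iff₀ hδ]
    exact le_of_mul_le_mul_right (by linarith) hDpos
  refine ⟨hbound, fun hεδ => hbound.trans_eq ?_⟩
  rw [hεδ]
  field_simp

/-- If the bipartite multigraph (left degree exactly `D`) is an `(|B|,ε)`
extractor on `B` (for every `A ⊆ R`, `||E(B,A)|/(|B|D) − |A|/|R|| ≤ ε`), then the number
of `δ`-bad vertices of `B` (those sending at least `δD` edges into the set of
`(1/ε)`-heavy right vertices) is at most `(2ε/δ)·|B|`; in particular if `ε = δ²` it is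
at most `2δ·|B|`. -/
theorem stmt_1 {L R : Type*} [Fintype L] [Fintype R] [DecidableEq R]
    (D : ℕ) (hD : 1 ≤ D) (N : L → Fin D → R)
    (B : Finset L) (hB : B.Nonempty)
    (δ ε : ℚ) (hδ : 0 < δ) (hε : 0 < ε)
    (hext : ∀ A : Finset R,
      |(((B ×ˢ (Finset.univ : Finset (Fin D))).filter (fun p => N p.1 p.2 ∈ A)).card : ℚ)
          / (B.card * D)
        - (A.card : ℚ) / Fintype.card R| ≤ ε) :
    let heavy : Finset R := Finset.univ.filter (fun z =>
      (1 / ε) * B.card * D / Fintype.card R <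
        (((B ×ˢ (Finset.univ : Finset (Fin D))).filter (fun p => N p.1 p.2 = z)).card : ℚ))
    ((B.filter (fun x => δ * D ≤
        (((Finset.univ : Finset (Fin D)).filter (fun i => N x i ∈ heavy)).card : ℚ))).card : ℚ)
      ≤ (2 * ε / δ) * B.card ∧
    (ε = δ ^ 2 →
      ((B.filter (fun x => δ * D ≤
          (((Finset.univ : Finset (Fin D)).filter (fun i => N x i ∈ heavy)).card : ℚ))).card : ℚ)
        ≤ 2 * δ * B.card) :=
  stmt_1_general D hD N B δ ε hδ hε hext
end

section
/- Suppose a string x of length n satisfies C(xz) ≤ C(x) + c/2 for a string z of length c, where C is plain Kolmogorov complexity relative to a fixed universal machine. The map sending each such z to a description of x of length at most C(x) + c/2 + 2·log c + O(1) (a shortest program for xz together with a self-delimiting encoding of c) is injective on the set of such z. Consequently, if for every string y and every d the number of programs of length ≤ C(y) + d is at most K·2^d (Chaitin's bound), then the number of strings z of length c with C(xz) ≤ C(x) + c/2 is at most K·2^{c/2 + 2·log c + O(1)}, which is less than 2^c for all sufficiently large c. Hence for all sufficiently large c, there exists z of length c with C(xz) > C(x) + c/2. -/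
/-!
A program determines its output, so distinct strings `z` have distinct shortest programs for
`x ++ z`. If all `2 ^ c` of them had length at most `C x + c / 2`, they would be `2 ^ c` distinct
binary strings among the fewer than `2 ^ (C x + c / 2 + 1)` strings of that length, which is
impossible as soon as `c > 2 * C x`.
-/

open Function

lemma card_lt_two_pow_of_injective_of_length_le {ι : Type*} [Fintype ι] {n : ℕ}
    (f : ι → List Bool) (hf : Injective f) (hlen : ∀ i, (f i).length ≤ n) :
    Fintype.card ι < 2 ^ (n + 1) := by
  let g : ι → Σ k : Fin (n + 1), List.Vector Bool k :=
    fun i => ⟨⟨(f i).length, Nat.lt_succ_of_le (hlen i)⟩, ⟨f i, rfl⟩⟩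
  have hg : Injective g := fun i j hij => hf (congrArg (fun s => s.2.toList) hij)
  calc Fintype.card ι ≤ Fintype.card (Σ k : Fin (n + 1), List.Vector Bool k) :=
        Fintype.card_le_of_injective g hg
    _ = ∑ k ∈ Finset.range (n + 1), 2 ^ k := by
        simp only [Fintype.card_sigma, card_vector, Fintype.card_bool,
          Fin.sum_univ_eq_sum_range (fun k => 2 ^ k)]
    _ < 2 ^ (n + 1) := Nat.geomSum_lt le_rfl fun k hk => Finset.mem_range.mp hk

lemma two_pow_lt_of_forall_complexity_append_le (U : List Bool → Option (List Bool))
    (C : List Bool → ℕ) (hC : ∀ y, ∃ p, U p = some y ∧ p.length ≤ C y)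
    (x : List Bool) {c L : ℕ} (hL : ∀ z : List Bool, z.length = c → C (x ++ z) ≤ L) :
    2 ^ c < 2 ^ (L + 1) := by
  choose p hpU hplen using hC
  have hinj : Injective fun z : List.Vector Bool c => p (x ++ z.toList) := by
    intro z w hzw
    have hout : x ++ z.toList = x ++ w.toList :=
      Option.some.inj ((hpU _).symm.trans ((congrArg U hzw).trans (hpU _)))
    exact List.Vector.eq z w (List.append_cancel_left hout)
  have hcard := card_lt_two_pow_of_injective_of_length_le _ hinj
    fun z => (hplen _).trans (hL z.toList z.toList_length)
  rwa [card_vector, Fintype.card_bool] at hcard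

theorem stmt_5_general (U : List Bool → Option (List Bool)) (C : List Bool → ℕ)
    (hC : ∀ y : List Bool,
      (∃ p, U p = some y ∧ p.length = C y) ∧ ∀ p, U p = some y → C y ≤ p.length)
    (x : List Bool) :
    ∃ c₀ : ℕ, ∀ c : ℕ, c₀ ≤ c →
      ∃ z : List Bool, z.length = c ∧ C x + c / 2 < C (x ++ z) := by
  refine ⟨2 * C x + 1, fun c hc => ?_⟩
  by_contra! hsmall
  have hshortest : ∀ y, ∃ p, U p = some y ∧ p.length ≤ C y := fun y =>
    let ⟨p, hpU, hplen⟩ := (hC y).1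
    ⟨p, hpU, hplen.le⟩
  have hpow := two_pow_lt_of_forall_complexity_append_le U C hshortest x hsmall
  have hlt := (Nat.pow_lt_pow_iff_right one_lt_two).mp hpow
  omega

/-- Let `C` be plain Kolmogorov complexity for a universal machine `U`
(`C y` is the length of a shortest program for `y`), and assume Chaitin's bound: for
every `y` and `d` there are at most `K·2^d` programs of length `≤ C y + d`. Then for
every string `x` and all sufficiently large `c` there exists a string `z` of length `c`
with `C (x ++ z) > C x + c/2`. -/
theorem stmt_5 (U : List Bool → Option (List Bool)) (C : List Bool → ℕ)
    (hC : ∀ y : List Bool,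
      (∃ p, U p = some y ∧ p.length = C y) ∧ ∀ p, U p = some y → C y ≤ p.length)
    (K : ℕ) (hK : 0 < K)
    (hChaitin : ∀ (y : List Bool) (d : ℕ),
      {p : List Bool | U p = some y ∧ p.length ≤ C y + d}.ncard ≤ K * 2 ^ d)
    (x : List Bool) :
    ∃ c₀ : ℕ, ∀ c : ℕ, c₀ ≤ c →
      ∃ z : List Bool, z.length = c ∧ C x + c / 2 < C (x ++ z) :=
  stmt_5_general U C hC x
end
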